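/- Let x be an automorphism of prime order p of a finite generalized quadrangle Q of order (s,t). (i) If the fixed substructure of x has type (2) and x fixes exactly one point, then s+1 ≡ 1 (mod p). (ii) If the fixed substructure of x has type (2) and x fixes at least two points, then t+1 ≡ 1 (mod p). (iii) If the fixed substructure of x has type (2') and x fixes exactly one line, then t+1 ≡ 1 (mod p). (iv) If the fixed substructure of x has type (2') and x fixes at least two lines, then s+1 ≡ 1 (mod p). -/

import Mathlib

/-- `IsGQ I s t` : the incidence relation `I` between the (finite) point type `P`
and line type `L` is a finite generalized quadrangle of order `(s,t)`. -/
structure IsGQ {P L : Type*} (I : P → L → Prop) (s t : ℕ) : Prop where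
  finP : Finite P
  finL : Finite L
  s_pos : 0 < s
  t_pos : 0 < t
  line_pts : ∀ ℓ : L, Nat.card {p : P // I p ℓ} = s + 1
  pt_lines : ∀ p : P, Nat.card {ℓ : L // I p ℓ} = t + 1
  unique_line : ∀ p q : P, p ≠ q → Nat.card {ℓ : L // I p ℓ ∧ I q ℓ} ≤ 1
  gq_axiom : ∀ (p : P) (ℓ : L), ¬ I p ℓ →
      ∃! pl : P × L, I p pl.2 ∧ I pl.1 pl.2 ∧ I pl.1 ℓ

/-- An automorphism of the incidence structure `I` : a pair of permutations of the
points and of the lines preserving incidence. -/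
@[ext] structure GQAut {P L : Type*} (I : P → L → Prop) where
  permP : Equiv.Perm P
  permL : Equiv.Perm L
  pres : ∀ p ℓ, I (permP p) (permL ℓ) ↔ I p ℓ

namespace GQAut

variable {P L : Type*} {I : P → L → Prop}

instance : Group (GQAut I) where
  mul x y := ⟨x.permP * y.permP, x.permL * y.permL, by
    intro p ℓ
    simp only [Equiv.Perm.mul_apply]
    rw [x.pres, y.pres]⟩
  one := ⟨1, 1, fun p ℓ => Iff.rfl⟩
  inv x := ⟨x.permP⁻¹, x.permL⁻¹, by
    intro p ℓ
    simpa using (x.pres (x.permP⁻¹ p) (x.permL⁻¹ ℓ)).symm⟩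
  mul_assoc a b c := by ext <;> rfl
  one_mul a := by ext <;> rfl
  mul_one a := by ext <;> rfl
  inv_mul_cancel a := by
    ext z
    · show a.permP⁻¹ (a.permP z) = z
      simp
    · show a.permL⁻¹ (a.permL z) = z
      simp

end GQAut

/-- Two points are collinear if some line is incident with both. -/
def Collin {P L : Type*} (I : P → L → Prop) (p q : P) : Prop := ∃ ℓ, I p ℓ ∧ I q ℓ

/-- Two lines are concurrent if some point is incident with both. -/
def Concur {P L : Type*} (I : P → L → Prop) (ℓ m : L) : Prop := ∃ p, I p ℓ ∧ I p m

/-- Number of points fixed by the automorphism `x`. -/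
noncomputable def alpha0 {P L : Type*} {I : P → L → Prop} (x : GQAut I) : ℕ :=
  Nat.card {p : P // x.permP p = p}

/-- Number of points moved by `x` to a distinct collinear point. -/
noncomputable def alpha1 {P L : Type*} {I : P → L → Prop} (x : GQAut I) : ℕ :=
  Nat.card {p : P // x.permP p ≠ p ∧ Collin I p (x.permP p)}

/-- Number of points sent by `x` to a noncollinear point. -/
noncomputable def alpha2 {P L : Type*} {I : P → L → Prop} (x : GQAut I) : ℕ :=
  Nat.card {p : P // ¬ Collin I p (x.permP p)}

/-- Number of lines fixed by the automorphism `x`. -/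
noncomputable def beta0 {P L : Type*} {I : P → L → Prop} (x : GQAut I) : ℕ :=
  Nat.card {ℓ : L // x.permL ℓ = ℓ}

/-- Number of lines moved by `x` to a distinct concurrent line. -/
noncomputable def beta1 {P L : Type*} {I : P → L → Prop} (x : GQAut I) : ℕ :=
  Nat.card {ℓ : L // x.permL ℓ ≠ ℓ ∧ Concur I ℓ (x.permL ℓ)}

/-- Number of lines sent by `x` to a nonconcurrent line. -/
noncomputable def beta2 {P L : Type*} {I : P → L → Prop} (x : GQAut I) : ℕ :=
  Nat.card {ℓ : L // ¬ Concur I ℓ (x.permL ℓ)}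

/-- The automorphism group is transitive on points. -/
def PointTransitive {P L : Type*} (I : P → L → Prop) : Prop :=
  ∀ p q : P, ∃ x : GQAut I, x.permP p = q

/-- The automorphism group is transitive on lines. -/
def LineTransitive {P L : Type*} (I : P → L → Prop) : Prop :=
  ∀ ℓ m : L, ∃ x : GQAut I, x.permL ℓ = m

/-- The fixed substructure of `x` has type (2): there is a fixed point `P₀` collinear
with every fixed point, at least one line is fixed, and every fixed line passes through `P₀`. -/
def FixedType2 {P L : Type*} (I : P → L → Prop) (x : GQAut I) : Prop :=
  ∃ P₀ : P, x.permP P₀ = P₀ ∧ (∀ p, x.permP p = p → Collin I P₀ p) ∧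
    (∃ ℓ, x.permL ℓ = ℓ) ∧ (∀ ℓ, x.permL ℓ = ℓ → I P₀ ℓ)

/-- The fixed substructure of `x` has type (2'): there is a fixed line `ℓ₀` concurrent
with every fixed line, at least one point is fixed, and every fixed point lies on `ℓ₀`. -/
def FixedType2' {P L : Type*} (I : P → L → Prop) (x : GQAut I) : Prop :=
  ∃ ℓ₀ : L, x.permL ℓ₀ = ℓ₀ ∧ (∀ ℓ, x.permL ℓ = ℓ → Concur I ℓ₀ ℓ) ∧
    (∃ p, x.permP p = p) ∧ (∀ p, x.permP p = p → I p ℓ₀)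

/-- The fixed substructure of `x` (fixed points and fixed lines with induced incidence)
is a generalized subquadrangle of order `(s', t')`. -/
def FixedSubGQ {P L : Type*} (I : P → L → Prop) (x : GQAut I) (s' t' : ℕ) : Prop :=
  IsGQ (fun (p : {p : P // x.permP p = p}) (ℓ : {ℓ : L // x.permL ℓ = ℓ}) => I p.1 ℓ.1) s' t'

/-!
An automorphism of prime order `p` acts on the points of a fixed line (and on the lines through
a fixed point) with orbits of length `1` or `p`, so if exactly one of them is fixed their number
is `≡ 1 (mod p)`. In type (2) with a single fixed point, that point lies on every fixed line;
with a second fixed point `q`, the line joining `q` to `P₀` is the only fixed line through `q`,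
since every fixed line passes through `P₀`. Types (2') are dual.
-/

theorem Equiv.Perm.card_modEq_one_of_existsUnique_fixed {α : Type*} [Finite α] {p : ℕ}
    (hp : p.Prime) {σ : Equiv.Perm α} (hσ : σ ^ p = 1) (h : ∃! a, σ a = a) :
    Nat.card α ≡ 1 [MOD p] := by
  classical
  have := Fintype.ofFinite α
  have := Fact.mk hp
  obtain ⟨a, ha, huniq⟩ := h
  have hfixed : σ.supportᶜ = {a} := by
    ext b
    simpa [Equiv.Perm.mem_support] using ⟨huniq b, fun hb => hb ▸ ha⟩
  have := Equiv.Perm.card_compl_support_modEq (n := 1) (by rwa [pow_one])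
  rwa [hfixed, Finset.card_singleton, ← Nat.card_eq_fintype_card, Nat.ModEq.comm] at this

theorem Equiv.Perm.card_subtype_modEq_one_of_existsUnique_fixed {α : Type*} [Finite α]
    {p : ℕ} (hp : p.Prime) {σ : Equiv.Perm α} (hσ : σ ^ p = 1) {pr : α → Prop}
    (hpr : ∀ a, pr (σ a) ↔ pr a) (h : ∃! a, pr a ∧ σ a = a) :
    Nat.card {a // pr a} ≡ 1 [MOD p] := by
  refine (σ.subtypePerm hpr).card_modEq_one_of_existsUnique_fixed hp ?_ ?_
  · ext a
    simp [Equiv.Perm.subtypePerm_pow, hσ]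
  · obtain ⟨a, ⟨hpa, ha⟩, huniq⟩ := h
    exact ⟨⟨a, hpa⟩, Subtype.ext ha, fun b hb =>
      Subtype.ext (huniq b ⟨b.2, congrArg Subtype.val hb⟩)⟩

namespace IsGQ

variable {P L : Type*} {I : P → L → Prop} {s t : ℕ}

theorem line_eq_of_incident (hGQ : IsGQ I s t) {q r : P} (hqr : q ≠ r) {ℓ m : L}
    (hqℓ : I q ℓ) (hrℓ : I r ℓ) (hqm : I q m) (hrm : I r m) : ℓ = m := by
  have := hGQ.finL
  have : Subsingleton {n : L // I q n ∧ I r n} :=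
    Finite.card_le_one_iff_subsingleton.mp (hGQ.unique_line q r hqr)
  exact congrArg Subtype.val
    (Subsingleton.elim (⟨ℓ, hqℓ, hrℓ⟩ : {n // I q n ∧ I r n}) ⟨m, hqm, hrm⟩)

theorem point_eq_of_incident (hGQ : IsGQ I s t) {ℓ m : L} (hℓm : ℓ ≠ m) {q r : P}
    (hqℓ : I q ℓ) (hqm : I q m) (hrℓ : I r ℓ) (hrm : I r m) : q = r := by
  by_contra hqr
  exact hℓm (hGQ.line_eq_of_incident hqr hqℓ hrℓ hqm hrm)

end IsGQ

namespace GQAut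

variable {P L : Type*} {I : P → L → Prop} (x : GQAut I)

theorem permP_pow (n : ℕ) : (x ^ n).permP = x.permP ^ n := by
  induction n with
  | zero => rfl
  | succ n ih => rw [pow_succ, pow_succ, ← ih]; rfl

theorem permL_pow (n : ℕ) : (x ^ n).permL = x.permL ^ n := by
  induction n with
  | zero => rfl
  | succ n ih => rw [pow_succ, pow_succ, ← ih]; rfl

variable {x}

theorem incident_permP_iff {ℓ : L} (hℓ : x.permL ℓ = ℓ) (q : P) :
    I (x.permP q) ℓ ↔ I q ℓ := by
  simpa only [hℓ] using x.pres q ℓ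

theorem incident_permL_iff {q : P} (hq : x.permP q = q) (ℓ : L) :
    I q (x.permL ℓ) ↔ I q ℓ := by
  simpa only [hq] using x.pres q ℓ

theorem permL_eq_self_of_incident {s t : ℕ} (hGQ : IsGQ I s t) {q r : P} (hqr : q ≠ r)
    (hq : x.permP q = q) (hr : x.permP r = r) {m : L} (hqm : I q m) (hrm : I r m) :
    x.permL m = m :=
  hGQ.line_eq_of_incident hqr ((incident_permL_iff hq m).mpr hqm)
    ((incident_permL_iff hr m).mpr hrm) hqm hrm

theorem permP_eq_self_of_incident {s t : ℕ} (hGQ : IsGQ I s t) {ℓ m : L} (hℓm : ℓ ≠ m)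
    (hℓ : x.permL ℓ = ℓ) (hm : x.permL m = m) {q : P} (hqℓ : I q ℓ) (hqm : I q m) :
    x.permP q = q :=
  hGQ.point_eq_of_incident hℓm ((incident_permP_iff hℓ q).mpr hqℓ)
    ((incident_permP_iff hm q).mpr hqm) hqℓ hqm

variable {p : ℕ} (hp : p.Prime) (hxp : x ^ p = 1)
include hp hxp

theorem card_points_on_modEq_one [Finite P] {ℓ : L} (hℓ : x.permL ℓ = ℓ)
    (h : ∃! q, I q ℓ ∧ x.permP q = q) : Nat.card {q // I q ℓ} ≡ 1 [MOD p] :=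
  Equiv.Perm.card_subtype_modEq_one_of_existsUnique_fixed hp
    (by rw [← permP_pow, hxp]; rfl) (incident_permP_iff hℓ) h

theorem card_lines_through_modEq_one [Finite L] {q : P} (hq : x.permP q = q)
    (h : ∃! ℓ, I q ℓ ∧ x.permL ℓ = ℓ) : Nat.card {ℓ // I q ℓ} ≡ 1 [MOD p] :=
  Equiv.Perm.card_subtype_modEq_one_of_existsUnique_fixed hp
    (by rw [← permL_pow, hxp]; rfl) (incident_permL_iff hq) h

end GQAut

section FixedSubstructure

variable {P L : Type*} {I : P → L → Prop} {s t p : ℕ} (hGQ : IsGQ I s t) (hp : p.Prime)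
  {x : GQAut I} (hxp : x ^ p = 1)
include hGQ hp hxp

theorem FixedType2.line_card_modEq_of_alpha0_eq_one (h : FixedType2 I x) (h1 : alpha0 x = 1) :
    s + 1 ≡ 1 [MOD p] := by
  obtain ⟨P₀, hP₀, -, ⟨ℓ, hℓ⟩, hlines⟩ := h
  have hunique : ∀ q, x.permP q = q → q = P₀ := fun q hq =>
    congrArg Subtype.val ((Nat.card_eq_one_iff_unique.mp h1).1.elim ⟨q, hq⟩ ⟨P₀, hP₀⟩)
  have := hGQ.finP
  rw [← hGQ.line_pts ℓ]
  exact GQAut.card_points_on_modEq_one hp hxp hℓ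
    ⟨P₀, ⟨hlines ℓ hℓ, hP₀⟩, fun q hq => hunique q hq.2⟩

theorem FixedType2.pencil_card_modEq_of_two_le_alpha0 (h : FixedType2 I x)
    (h2 : 2 ≤ alpha0 x) : t + 1 ≡ 1 [MOD p] := by
  obtain ⟨P₀, hP₀, hcol, -, hlines⟩ := h
  have := hGQ.finP
  have := hGQ.finL
  have : Nontrivial {q // x.permP q = q} := Finite.one_lt_card_iff_nontrivial.mp h2
  obtain ⟨⟨q, hq⟩, hqP₀⟩ := exists_ne (⟨P₀, hP₀⟩ : {q // x.permP q = q})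
  replace hqP₀ : q ≠ P₀ := fun h => hqP₀ (Subtype.ext h)
  obtain ⟨m, hP₀m, hqm⟩ := hcol q hq
  have hm := GQAut.permL_eq_self_of_incident hGQ hqP₀.symm hP₀ hq hP₀m hqm
  rw [← hGQ.pt_lines q]
  exact GQAut.card_lines_through_modEq_one hp hxp hq
    ⟨m, ⟨hqm, hm⟩, fun n hn => hGQ.line_eq_of_incident hqP₀ hn.1 (hlines n hn.2) hqm hP₀m⟩

theorem FixedType2'.pencil_card_modEq_of_beta0_eq_one (h : FixedType2' I x)
    (h1 : beta0 x = 1) : t + 1 ≡ 1 [MOD p] := by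
  obtain ⟨ℓ₀, hℓ₀, -, ⟨q, hq⟩, hpts⟩ := h
  have hunique : ∀ ℓ, x.permL ℓ = ℓ → ℓ = ℓ₀ := fun ℓ hℓ =>
    congrArg Subtype.val ((Nat.card_eq_one_iff_unique.mp h1).1.elim ⟨ℓ, hℓ⟩ ⟨ℓ₀, hℓ₀⟩)
  have := hGQ.finL
  rw [← hGQ.pt_lines q]
  exact GQAut.card_lines_through_modEq_one hp hxp hq
    ⟨ℓ₀, ⟨hpts q hq, hℓ₀⟩, fun ℓ hℓ => hunique ℓ hℓ.2⟩

theorem FixedType2'.line_card_modEq_of_two_le_beta0 (h : FixedType2' I x)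
    (h2 : 2 ≤ beta0 x) : s + 1 ≡ 1 [MOD p] := by
  obtain ⟨ℓ₀, hℓ₀, hconc, -, hpts⟩ := h
  have := hGQ.finP
  have := hGQ.finL
  have : Nontrivial {ℓ // x.permL ℓ = ℓ} := Finite.one_lt_card_iff_nontrivial.mp h2
  obtain ⟨⟨m, hm⟩, hmℓ₀⟩ := exists_ne (⟨ℓ₀, hℓ₀⟩ : {ℓ // x.permL ℓ = ℓ})
  replace hmℓ₀ : m ≠ ℓ₀ := fun h => hmℓ₀ (Subtype.ext h)
  obtain ⟨r, hrℓ₀, hrm⟩ := hconc m hm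
  have hr := GQAut.permP_eq_self_of_incident hGQ hmℓ₀.symm hℓ₀ hm hrℓ₀ hrm
  rw [← hGQ.line_pts m]
  exact GQAut.card_points_on_modEq_one hp hxp hm
    ⟨r, ⟨hrm, hr⟩, fun q hq => hGQ.point_eq_of_incident hmℓ₀ hq.1 (hpts q hq.2) hrm hrℓ₀⟩

end FixedSubstructure

/-- For an automorphism x of prime order p of a GQ of order (s,t):
(i) type (2) with exactly one fixed point gives s+1 ≡ 1 (mod p);
(ii) type (2) with at least two fixed points gives t+1 ≡ 1 (mod p);
(iii) type (2') with exactly one fixed line gives t+1 ≡ 1 (mod p);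
(iv) type (2') with at least two fixed lines gives s+1 ≡ 1 (mod p). -/
theorem statement9 {P L : Type*} (I : P → L → Prop) (s t : ℕ)
    (hGQ : IsGQ I s t) (p : ℕ) (hp : p.Prime) (x : GQAut I) (hx : orderOf x = p) :
    (FixedType2 I x → alpha0 x = 1 → s + 1 ≡ 1 [MOD p]) ∧
    (FixedType2 I x → 2 ≤ alpha0 x → t + 1 ≡ 1 [MOD p]) ∧
    (FixedType2' I x → beta0 x = 1 → t + 1 ≡ 1 [MOD p]) ∧
    (FixedType2' I x → 2 ≤ beta0 x → s + 1 ≡ 1 [MOD p]) := by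
  have hxp : x ^ p = 1 := hx ▸ pow_orderOf_eq_one x
  exact ⟨fun h => h.line_card_modEq_of_alpha0_eq_one hGQ hp hxp,
    fun h => h.pencil_card_modEq_of_two_le_alpha0 hGQ hp hxp,
    fun h => h.pencil_card_modEq_of_beta0_eq_one hGQ hp hxp,
    fun h => h.line_card_modEq_of_two_le_beta0 hGQ hp hxp⟩
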